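/- Soundness of the martingale rule for AST: Let M be a finitely-branching MDP with absorbing terminal state ⊥ and initial state σ. Suppose there exist V : S → ℝ and U : S → ℕ such that (i) V(⊥) = 0 and V(s) > 0 for every s ∈ Reach(σ) with s ≠ ⊥; (ii) V is a supermartingale function on Reach(σ); (iii) U(⊥) = 0 and U(s) ≥ 1 for every s ∈ Reach(σ) with s ≠ ⊥; (iv) for every r ∈ ℝ the set {U(s) : s ∈ Reach(σ), V(s) ≤ r} is bounded; and (v) for every r ∈ ℝ there exists ε_r > 0 such that for every s ∈ Reach(σ) with s ≠ ⊥ and V(s) ≤ r and every action μ ∈ Act(s), μ({s' : U(s') < U(s)}) ≥ ε_r. Then M is almost surely terminating from σ. -/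

import Mathlib

open scoped ENNReal Classical

/-- A finitely-branching MDP on a state space `S`: each state has a nonempty finite
set of available actions, each a finitely-supported PMF on `S`. -/
structure MDP (S : Type) where
  act : S → Finset (PMF S)
  act_nonempty : ∀ s, (act s).Nonempty
  act_finSupp : ∀ s, ∀ μ ∈ act s, (μ : PMF S).support.Finite

/-- A scheduler maps every history `(s₀, …, sₙ)` (given as the list of earlier
states `s₀, …, sₙ₋₁` together with the current state `sₙ`) to an available action. -/
structure Scheduler {S : Type} (M : MDP S) where
  choose : List S → S → PMF S
  choose_mem : ∀ hist s, choose hist s ∈ M.act s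

namespace MDP

variable {S : Type}

/-- Reachability: `s'` is reachable from `σ` via a finite path each of whose steps
lies in the support of some available action. -/
inductive Reach (M : MDP S) (σ : S) : S → Prop
  | refl : Reach M σ σ
  | step {s s' : S} (μ : PMF S) : Reach M σ s → μ ∈ M.act s → s' ∈ μ.support → Reach M σ s'

/-- Probability that the run (currently at `s`, with past history `hist`) visits the
set `T` within the next `k` steps, under scheduler `𝔰`. -/
noncomputable def hitProbAux (M : MDP S) (𝔰 : Scheduler M) (T : Set S) :
    ℕ → List S → S → ℝ≥0∞
  | 0, _, s => if s ∈ T then 1 else 0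
  | k + 1, hist, s =>
      if s ∈ T then 1
      else ∑' s', (𝔰.choose hist s) s' * hitProbAux M 𝔰 T k (hist ++ [s]) s'

/-- Probability that the run started at `σ` visits `T` within the first `k` steps. -/
noncomputable def hitProbWithin (M : MDP S) (𝔰 : Scheduler M) (σ : S) (T : Set S)
    (k : ℕ) : ℝ≥0∞ :=
  hitProbAux M 𝔰 T k [] σ

/-- Probability that the run started at `σ` ever visits `T`, under scheduler `𝔰`. -/
noncomputable def hitProb (M : MDP S) (𝔰 : Scheduler M) (σ : S) (T : Set S) : ℝ≥0∞ :=
  ⨆ k, hitProbWithin M 𝔰 σ T k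

/-- The terminal state `term` is absorbing: the only action there is the Dirac PMF. -/
def Absorbing (M : MDP S) (term : S) : Prop :=
  M.act term = {PMF.pure term}

/-- Termination probability: infimum over schedulers of the probability of visiting
the terminal state. -/
noncomputable def PrTerm (M : MDP S) (term σ : S) : ℝ≥0∞ :=
  ⨅ 𝔰 : Scheduler M, hitProb M 𝔰 σ {term}

/-- Almost-sure termination from `σ`. -/
def AST (M : MDP S) (term σ : S) : Prop := PrTerm M term σ = 1

/-- Mass a PMF assigns to a set. -/
noncomputable def mass (μ : PMF S) (A : Set S) : ℝ≥0∞ := ∑' a : A, μ a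

/-- Expected value of a real-valued function under a (finitely supported) PMF. -/
noncomputable def expect (μ : PMF S) (V : S → ℝ) : ℝ := ∑' s, (μ s).toReal * V s

/-- `V` is a supermartingale function on the states reachable from `σ`. -/
def SupermartingaleOn (M : MDP S) (σ : S) (V : S → ℝ) : Prop :=
  ∀ s, M.Reach σ s → ∀ μ ∈ M.act s, expect μ V ≤ V s

/-- `(Ψ, p)` is a stochastic invariant for initial state `σ`: under every scheduler the
probability that the run ever leaves `Ψ` is at most `p`. -/
def StochasticInvariant (M : MDP S) (σ : S) (Ψ : Set S) (p : ℝ) : Prop :=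
  ⨆ 𝔰 : Scheduler M, hitProb M 𝔰 σ Ψᶜ ≤ ENNReal.ofReal p

end MDP

/-! Fix a scheduler and a level `r`. Below `r` the variant `U` is bounded by some `N` and
decreases with probability at least `ε`, so from every reachable state the run enters
`{term} ∪ {V > r}` within `N` steps with probability at least `ε ^ N`; restarting this argument
after every `N` steps shows that the run enters that set almost surely. By Ville's inequality for
the nonnegative supermartingale `V`, it enters `{V > r}` with probability at most `V σ / r`, so it
terminates with probability at least `1 - V σ / r` for every `r`. -/

namespace MDP

variable {S : Type}

theorem tsum_mul_le_tsum_mul_of_le_on_support {μ : PMF S} {f g : S → ℝ≥0∞}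
    (h : ∀ s ∈ μ.support, f s ≤ g s) : ∑' s, μ s * f s ≤ ∑' s, μ s * g s :=
  ENNReal.tsum_le_tsum fun s => by
    by_cases hs : μ s = 0
    · simp [hs]
    · exact mul_le_mul_right (h s hs) _

theorem mass_mul_le_tsum_mul {μ : PMF S} {A : Set S} {c : ℝ≥0∞} {f : S → ℝ≥0∞}
    (h : ∀ s ∈ A, s ∈ μ.support → c ≤ f s) : mass μ A * c ≤ ∑' s, μ s * f s :=
  calc mass μ A * c = ∑' a : A, μ a * c := ENNReal.tsum_mul_right.symm
    _ ≤ ∑' a : A, μ a * f a := by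
      refine ENNReal.tsum_le_tsum fun a => ?_
      by_cases ha : μ a = 0
      · simp [ha]
      · exact mul_le_mul_right (h a a.2 ha) _
    _ ≤ ∑' s, μ s * f s :=
      ENNReal.tsum_comp_le_tsum_of_injective Subtype.val_injective fun s => μ s * f s

theorem tsum_mul_ofReal_eq_ofReal_expect {μ : PMF S} {f : S → ℝ} (hμ : μ.support.Finite)
    (hf : ∀ s ∈ μ.support, 0 ≤ f s) :
    ∑' s, μ s * ENNReal.ofReal (f s) = ENNReal.ofReal (expect μ f) := by
  have hterm : ∀ s, μ s * ENNReal.ofReal (f s) = ENNReal.ofReal ((μ s).toReal * f s) ∧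
      0 ≤ (μ s).toReal * f s := by
    intro s
    by_cases hs : μ s = 0
    · simp [hs]
    · refine ⟨?_, mul_nonneg ENNReal.toReal_nonneg (hf s hs)⟩
      rw [ENNReal.ofReal_mul ENNReal.toReal_nonneg, ENNReal.ofReal_toReal (μ.apply_ne_top s)]
  have hsum : Summable fun s => (μ s).toReal * f s :=
    summable_of_hasFiniteSupport <| hμ.subset fun s hs h0 => hs (by simp [h0])
  rw [expect, ENNReal.ofReal_tsum_of_nonneg (fun s => (hterm s).2) hsum]
  exact tsum_congr fun s => (hterm s).1

instance (M : MDP S) : Nonempty (Scheduler M) :=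
  ⟨⟨fun _ s => (M.act_nonempty s).choose, fun _ s => (M.act_nonempty s).choose_spec⟩⟩

noncomputable def missProbAux (M : MDP S) (𝔰 : Scheduler M) (T : Set S) :
    ℕ → List S → S → ℝ≥0∞
  | 0, _, s => if s ∈ T then 0 else 1
  | k + 1, hist, s =>
      if s ∈ T then 0
      else ∑' s', (𝔰.choose hist s) s' * missProbAux M 𝔰 T k (hist ++ [s]) s'

variable {M : MDP S} {𝔰 : Scheduler M} {T : Set S}

theorem hitProbAux_of_mem {s : S} (hs : s ∈ T) (k : ℕ) (hist : List S) :
    hitProbAux M 𝔰 T k hist s = 1 := by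
  cases k <;> simp [hitProbAux, hs]

theorem missProbAux_of_mem {s : S} (hs : s ∈ T) (k : ℕ) (hist : List S) :
    missProbAux M 𝔰 T k hist s = 0 := by
  cases k <;> simp [missProbAux, hs]

theorem hitProbAux_succ_of_notMem {s : S} (hs : s ∉ T) (k : ℕ) (hist : List S) :
    hitProbAux M 𝔰 T (k + 1) hist s =
      ∑' s', 𝔰.choose hist s s' * hitProbAux M 𝔰 T k (hist ++ [s]) s' := by
  rw [hitProbAux, if_neg hs]

theorem missProbAux_succ_of_notMem {s : S} (hs : s ∉ T) (k : ℕ) (hist : List S) :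
    missProbAux M 𝔰 T (k + 1) hist s =
      ∑' s', 𝔰.choose hist s s' * missProbAux M 𝔰 T k (hist ++ [s]) s' := by
  rw [missProbAux, if_neg hs]

theorem hitProbAux_add_missProbAux (k : ℕ) (hist : List S) (s : S) :
    hitProbAux M 𝔰 T k hist s + missProbAux M 𝔰 T k hist s = 1 := by
  induction k generalizing hist s with
  | zero => by_cases hs : s ∈ T <;> simp [hitProbAux, missProbAux, hs]
  | succ k ih =>
    by_cases hs : s ∈ T
    · simp [hitProbAux_of_mem hs, missProbAux_of_mem hs]
    · rw [hitProbAux_succ_of_notMem hs, missProbAux_succ_of_notMem hs, ← ENNReal.tsum_add]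
      simp only [← mul_add, ih, mul_one, PMF.tsum_coe]

theorem hitProbAux_le_one (k : ℕ) (hist : List S) (s : S) : hitProbAux M 𝔰 T k hist s ≤ 1 :=
  (hitProbAux_add_missProbAux k hist s).symm ▸ le_self_add

theorem missProbAux_le_one (k : ℕ) (hist : List S) (s : S) : missProbAux M 𝔰 T k hist s ≤ 1 :=
  (hitProbAux_add_missProbAux k hist s).symm ▸ le_add_self

theorem hitProb_le_one (σ : S) : hitProb M 𝔰 σ T ≤ 1 :=
  iSup_le fun k => hitProbAux_le_one k [] σ

theorem hitProbAux_union_le (A B : Set S) (k : ℕ) (hist : List S) (s : S) :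
    hitProbAux M 𝔰 (A ∪ B) k hist s ≤ hitProbAux M 𝔰 A k hist s + hitProbAux M 𝔰 B k hist s := by
  induction k generalizing hist s with
  | zero => by_cases hA : s ∈ A <;> by_cases hB : s ∈ B <;> simp [hitProbAux, hA, hB]
  | succ k ih =>
    by_cases hA : s ∈ A
    · rw [hitProbAux_of_mem (Set.mem_union_left B hA), hitProbAux_of_mem hA]
      exact le_self_add
    by_cases hB : s ∈ B
    · rw [hitProbAux_of_mem (Set.mem_union_right A hB), hitProbAux_of_mem hB]
      exact le_add_self
    rw [hitProbAux_succ_of_notMem (by simp [hA, hB] : s ∉ A ∪ B), hitProbAux_succ_of_notMem hA,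
      hitProbAux_succ_of_notMem hB, ← ENNReal.tsum_add]
    exact ENNReal.tsum_le_tsum fun s' => (mul_le_mul_right (ih _ s') _).trans_eq (mul_add _ _ _)

theorem hitProb_union_le (σ : S) (A B : Set S) :
    hitProb M 𝔰 σ (A ∪ B) ≤ hitProb M 𝔰 σ A + hitProb M 𝔰 σ B :=
  iSup_le fun k => (hitProbAux_union_le A B k [] σ).trans
    (add_le_add (le_iSup (hitProbWithin M 𝔰 σ A) k) (le_iSup (hitProbWithin M 𝔰 σ B) k))

theorem ofReal_mul_hitProbAux_le {σ : S} {V : S → ℝ} (hVnn : ∀ s, M.Reach σ s → 0 ≤ V s)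
    (hVsm : M.SupermartingaleOn σ V) (r : ℝ) (k : ℕ) (hist : List S) {s : S}
    (hs : M.Reach σ s) :
    ENNReal.ofReal r * hitProbAux M 𝔰 {x | r < V x} k hist s ≤ ENNReal.ofReal (V s) := by
  by_cases hrs : s ∈ {x | r < V x}
  · rw [hitProbAux_of_mem hrs, mul_one]
    exact ENNReal.ofReal_le_ofReal hrs.le
  induction k generalizing hist s with
  | zero => simp [hitProbAux, hrs]
  | succ k ih =>
    set μ := 𝔰.choose hist s
    have hμ : μ ∈ M.act s := 𝔰.choose_mem hist s
    have hreach : ∀ s' ∈ μ.support, M.Reach σ s' := fun s' hs' => Reach.step μ hs hμ hs'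
    rw [hitProbAux_succ_of_notMem hrs]
    calc ENNReal.ofReal r * ∑' s', μ s' * hitProbAux M 𝔰 {x | r < V x} k (hist ++ [s]) s'
        = ∑' s', μ s' * (ENNReal.ofReal r * hitProbAux M 𝔰 {x | r < V x} k (hist ++ [s]) s') := by
          rw [← ENNReal.tsum_mul_left]
          exact tsum_congr fun s' => mul_left_comm _ _ _
      _ ≤ ∑' s', μ s' * ENNReal.ofReal (V s') :=
          tsum_mul_le_tsum_mul_of_le_on_support fun s' hs' => by
            by_cases hrs' : s' ∈ {x | r < V x}
            · rw [hitProbAux_of_mem hrs', mul_one]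
              exact ENNReal.ofReal_le_ofReal hrs'.le
            · exact ih (hist ++ [s]) (hreach s' hs') hrs'
      _ = ENNReal.ofReal (expect μ V) :=
          tsum_mul_ofReal_eq_ofReal_expect (M.act_finSupp s μ hμ) fun s' hs' =>
            hVnn s' (hreach s' hs')
      _ ≤ ENNReal.ofReal (V s) := ENNReal.ofReal_le_ofReal (hVsm s hs μ hμ)

theorem ofReal_mul_hitProb_le {σ : S} {V : S → ℝ} (hVnn : ∀ s, M.Reach σ s → 0 ≤ V s)
    (hVsm : M.SupermartingaleOn σ V) (r : ℝ) :
    ENNReal.ofReal r * hitProb M 𝔰 σ {x | r < V x} ≤ ENNReal.ofReal (V σ) := by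
  rw [hitProb, ENNReal.mul_iSup]
  exact iSup_le fun k => ofReal_mul_hitProbAux_le hVnn hVsm r k [] Reach.refl

theorem pow_le_hitProbAux {σ : S} {U : S → ℕ} {ε : ℝ≥0∞} (hε : 0 < ε) (hε1 : ε ≤ 1)
    (hdec : ∀ s, M.Reach σ s → s ∉ T → ∀ μ ∈ M.act s, ε ≤ mass μ {s' | U s' < U s})
    (n : ℕ) (hist : List S) {s : S} (hs : M.Reach σ s) (hUs : U s ≤ n) :
    ε ^ n ≤ hitProbAux M 𝔰 T n hist s := by
  by_cases hsT : s ∈ T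
  · rw [hitProbAux_of_mem hsT]
    exact pow_le_one₀ hε.le hε1
  have hμ : 𝔰.choose hist s ∈ M.act s := 𝔰.choose_mem hist s
  have hmass := hdec s hs hsT _ hμ
  induction n generalizing hist s with
  | zero =>
    have hempty : {s' | U s' < U s} = ∅ := by simp [Nat.le_zero.1 hUs]
    rw [hempty, mass, tsum_empty] at hmass
    exact absurd (le_zero_iff.1 hmass) hε.ne'
  | succ n ih =>
    rw [hitProbAux_succ_of_notMem hsT, pow_succ']
    refine (mul_le_mul_left hmass _).trans (mass_mul_le_tsum_mul fun s' hs'U hs' => ?_)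
    have hreach := Reach.step _ hs hμ hs'
    by_cases hs'T : s' ∈ T
    · rw [hitProbAux_of_mem hs'T]
      exact pow_le_one₀ hε.le hε1
    · exact ih (hist ++ [s]) hreach (Nat.lt_succ_iff.1 (hs'U.trans_le hUs)) hs'T
        (𝔰.choose_mem _ _) (hdec s' hreach hs'T _ (𝔰.choose_mem _ _))

theorem missProbAux_add_le {σ : S} {m : ℕ} {c : ℝ≥0∞}
    (hc : ∀ s, M.Reach σ s → ∀ hist, missProbAux M 𝔰 T m hist s ≤ c) (n : ℕ) (hist : List S)
    {s : S} (hs : M.Reach σ s) :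
    missProbAux M 𝔰 T (n + m) hist s ≤ missProbAux M 𝔰 T n hist s * c := by
  by_cases hsT : s ∈ T
  · rw [missProbAux_of_mem hsT, missProbAux_of_mem hsT, zero_mul]
  induction n generalizing hist s with
  | zero => simpa [missProbAux, hsT] using hc s hs hist
  | succ n ih =>
    rw [Nat.add_right_comm, missProbAux_succ_of_notMem hsT, missProbAux_succ_of_notMem hsT,
      ← ENNReal.tsum_mul_right]
    simp_rw [mul_assoc]
    refine tsum_mul_le_tsum_mul_of_le_on_support fun s' hs' => ?_
    by_cases hs'T : s' ∈ T
    · simp [missProbAux_of_mem hs'T]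
    exact ih _ (Reach.step _ hs (𝔰.choose_mem hist s) hs') hs'T

theorem missProbAux_mul_le_pow {σ : S} {N : ℕ} {δ : ℝ≥0∞}
    (hδ : ∀ s, M.Reach σ s → ∀ hist, δ ≤ hitProbAux M 𝔰 T N hist s) (k : ℕ) (hist : List S)
    {s : S} (hs : M.Reach σ s) :
    missProbAux M 𝔰 T (k * N) hist s ≤ (1 - δ) ^ k := by
  induction k generalizing hist s with
  | zero => simpa using missProbAux_le_one 0 hist s
  | succ k ih =>
    have hN : missProbAux M 𝔰 T N hist s ≤ 1 - δ :=
      calc missProbAux M 𝔰 T N hist s = 1 - hitProbAux M 𝔰 T N hist s :=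
            ENNReal.eq_sub_of_add_eq (ne_top_of_le_ne_top ENNReal.one_ne_top
              (hitProbAux_le_one N hist s)) (by rw [add_comm, hitProbAux_add_missProbAux])
        _ ≤ 1 - δ := tsub_le_tsub_left (hδ s hs hist) 1
    calc missProbAux M 𝔰 T ((k + 1) * N) hist s
        = missProbAux M 𝔰 T (N + k * N) hist s := by rw [Nat.succ_mul, Nat.add_comm]
      _ ≤ missProbAux M 𝔰 T N hist s * (1 - δ) ^ k :=
          missProbAux_add_le (fun s' hs' hist' => ih hist' hs') N hist hs
      _ ≤ (1 - δ) ^ (k + 1) := by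
        rw [pow_succ']
        exact mul_le_mul_left hN _

theorem hitProb_eq_one_of_le_hitProbAux {σ : S} {N : ℕ} {δ : ℝ≥0∞} (hδ0 : 0 < δ)
    (hδ : ∀ s, M.Reach σ s → ∀ hist, δ ≤ hitProbAux M 𝔰 T N hist s) :
    hitProb M 𝔰 σ T = 1 := by
  refine le_antisymm (hitProb_le_one σ) ?_
  have hbound : ∀ k, 1 ≤ hitProb M 𝔰 σ T + (1 - δ) ^ k := fun k =>
    calc 1 = hitProbAux M 𝔰 T (k * N) [] σ + missProbAux M 𝔰 T (k * N) [] σ :=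
          (hitProbAux_add_missProbAux _ _ _).symm
      _ ≤ hitProb M 𝔰 σ T + (1 - δ) ^ k :=
          add_le_add (le_iSup (hitProbWithin M 𝔰 σ T) (k * N))
            (missProbAux_mul_le_pow hδ k [] Reach.refl)
  have hlim : Filter.Tendsto (fun k => hitProb M 𝔰 σ T + (1 - δ) ^ k) Filter.atTop
      (nhds (hitProb M 𝔰 σ T + 0)) :=
    tendsto_const_nhds.add <| ENNReal.tendsto_pow_atTop_nhds_zero_of_lt_one <|
      ENNReal.sub_lt_self ENNReal.one_ne_top one_ne_zero hδ0.ne'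
  simpa using ge_of_tendsto' hlim hbound

theorem hitProb_union_superlevel_eq_one {term σ : S} {V : S → ℝ} {U : S → ℕ} {r : ℝ}
    (hUbd : BddAbove {u : ℕ | ∃ s, M.Reach σ s ∧ V s ≤ r ∧ U s = u})
    (hprog : ∃ ε : ℝ, 0 < ε ∧ ∀ s, M.Reach σ s → s ≠ term → V s ≤ r →
      ∀ μ ∈ M.act s, ENNReal.ofReal ε ≤ mass μ {s' | U s' < U s}) :
    hitProb M 𝔰 σ ({term} ∪ {x | r < V x}) = 1 := by
  obtain ⟨ε, hε, hεprog⟩ := hprog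
  obtain ⟨N, hN⟩ := hUbd
  set ε' := min (ENNReal.ofReal ε) 1
  have hε' : 0 < ε' := lt_min (ENNReal.ofReal_pos.2 hε) one_pos
  have hdec : ∀ s, M.Reach σ s → s ∉ {term} ∪ {x | r < V x} →
      ∀ μ ∈ M.act s, ε' ≤ mass μ {s' | U s' < U s} := by
    intro s hs hsT μ hμ
    exact (min_le_left _ _).trans (hεprog s hs (fun h => hsT (Or.inl h))
      (not_lt.1 fun h => hsT (Or.inr h)) μ hμ)
  refine hitProb_eq_one_of_le_hitProbAux (N := N) (ENNReal.pow_pos hε' N) fun s hs hist => ?_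
  by_cases hsT : s ∈ {term} ∪ {x | r < V x}
  · rw [hitProbAux_of_mem hsT]
    exact pow_le_one₀ hε'.le (min_le_right _ _)
  · have hVs : V s ≤ r := not_lt.1 fun h => hsT (Or.inr h)
    exact pow_le_hitProbAux hε' (min_le_right _ _) hdec N hist hs (hN ⟨s, hs, hVs, rfl⟩)

theorem hitProb_eq_one_of_supermartingale {σ : S} {V : S → ℝ}
    (hVnn : ∀ s, M.Reach σ s → 0 ≤ V s) (hVsm : M.SupermartingaleOn σ V)
    (hescape : ∀ n : ℕ, hitProb M 𝔰 σ (T ∪ {x | (n : ℝ) < V x}) = 1) :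
    hitProb M 𝔰 σ T = 1 := by
  set p := hitProb M 𝔰 σ T
  have hbound : ∀ n : ℕ, (1 - p) * n ≤ ENNReal.ofReal (V σ) := fun n =>
    calc (1 - p) * n ≤ hitProb M 𝔰 σ {x | (n : ℝ) < V x} * n := by
          gcongr
          rw [tsub_le_iff_left, ← hescape n]
          exact hitProb_union_le σ _ _
      _ = ENNReal.ofReal n * hitProb M 𝔰 σ {x | (n : ℝ) < V x} := by
          rw [ENNReal.ofReal_natCast, mul_comm]
      _ ≤ ENNReal.ofReal (V σ) := ofReal_mul_hitProb_le hVnn hVsm n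
  have hmiss : 1 - p = 0 := by
    by_contra hne
    obtain ⟨n, hn⟩ := ENNReal.exists_nat_mul_gt hne ENNReal.ofReal_ne_top
    exact (hbound n).not_gt (mul_comm (n : ℝ≥0∞) _ ▸ hn)
  exact le_antisymm (hitProb_le_one σ) (tsub_eq_zero_iff_le.1 hmiss)

end MDP

theorem martingale_rule_sound_general {S : Type} (M : MDP S) (term σ : S)
    (V : S → ℝ) (U : S → ℕ)
    (hV0 : V term = 0)
    (hVpos : ∀ s, M.Reach σ s → s ≠ term → 0 < V s)
    (hVsm : M.SupermartingaleOn σ V)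
    (hUbd : ∀ r : ℝ, BddAbove {u : ℕ | ∃ s, M.Reach σ s ∧ V s ≤ r ∧ U s = u})
    (hprog : ∀ r : ℝ, ∃ ε : ℝ, 0 < ε ∧ ∀ s, M.Reach σ s → s ≠ term → V s ≤ r →
      ∀ μ ∈ M.act s, ENNReal.ofReal ε ≤ MDP.mass μ {s' | U s' < U s}) :
    M.AST term σ := by
  have hVnn : ∀ s, M.Reach σ s → 0 ≤ V s := fun s hs => by
    rcases eq_or_ne s term with rfl | hne
    · exact hV0.ge
    · exact (hVpos s hs hne).le
  have hsure : ∀ 𝔰 : Scheduler M, M.hitProb 𝔰 σ {term} = 1 := fun 𝔰 =>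
    MDP.hitProb_eq_one_of_supermartingale hVnn hVsm fun n =>
      MDP.hitProb_union_superlevel_eq_one (hUbd n) (hprog n)
  simp only [MDP.AST, MDP.PrTerm, hsure, iInf_const]

/-- **Soundness of the martingale rule for AST.** Suppose `V : S → ℝ` is zero at the
terminal state and positive at all other reachable states, is a supermartingale function on
the reachable states, and `U : S → ℕ` is a variant (zero exactly at the terminal state on
reachable states) such that on every sublevel set of `V` the values of `U` are bounded and
`U` decreases with some probability bounded away from zero.  Then `M` is almost surely
terminating from `σ`. -/
theorem martingale_rule_sound {S : Type} [Countable S] (M : MDP S) (term σ : S)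
    (hterm : M.Absorbing term)
    (V : S → ℝ) (U : S → ℕ)
    (hV0 : V term = 0)
    (hVpos : ∀ s, M.Reach σ s → s ≠ term → 0 < V s)
    (hVsm : M.SupermartingaleOn σ V)
    (hU0 : U term = 0)
    (hU1 : ∀ s, M.Reach σ s → s ≠ term → 1 ≤ U s)
    (hUbd : ∀ r : ℝ, BddAbove {u : ℕ | ∃ s, M.Reach σ s ∧ V s ≤ r ∧ U s = u})
    (hprog : ∀ r : ℝ, ∃ ε : ℝ, 0 < ε ∧ ∀ s, M.Reach σ s → s ≠ term → V s ≤ r →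
      ∀ μ ∈ M.act s, ENNReal.ofReal ε ≤ MDP.mass μ {s' | U s' < U s}) :
    M.AST term σ :=
  martingale_rule_sound_general M term σ V U hV0 hVpos hVsm hUbd hprog
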